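/- Let r ≥ 1 be an integer, q real with 0 < q < 1, x a real number, w_1, …, w_r positive real numbers, and a_1, …, a_r positive real numbers. Define E_{n,q}^{(r)}(x|w_1,…,w_r; a_1,…,a_r) = (2^r/(1-q)^n) Σ_{l=0}^n C(n,l)(-1)^l q^{lx} / ∏_{j=1}^r (1+q^{l w_j + a_j}). Then for every complex number t, the series Σ_{n=0}^∞ E_{n,q}^{(r)}(x|w_1,…,w_r; a_1,…,a_r) t^n/n! and the multiple series 2^r Σ_{(m_1,…,m_r)∈ℕ^r} (-1)^{m_1+⋯+m_r} q^{a_1 m_1 + ⋯ + a_r m_r} exp([x + w_1 m_1 + ⋯ + w_r m_r]_q · t) both converge absolutely and are equal. -/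

import Mathlib

/-
Expanding `[x + w·m]_q ^ n = (1 - q^(x + w·m))^n / (1 - q)^n` binomially and summing, for each
binomial index `l`, the geometric series in every `m_j` of ratio `-q^(l w_j + a_j)` shows that
`E_n / 2^r` is the `n`-th moment `Σ_m (-1)^|m| q^(a·m) [x + w·m]_q ^ n` of a summable signed
weight. Since `|[y]_q| ≤ (1 + q^x)/(1 - q)` for `y ≥ x`, the double series over `(n, m)` of
weight times `([x + w·m]_q t)^n / n!` converges absolutely, and summing it in either order gives
the two sides.
-/

open Finset

/-- The `q`-analogue `[y]_q = (1 - q^y)/(1 - q)` (real power). -/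
noncomputable def qnum (q y : ℝ) : ℝ := (1 - q ^ y) / (1 - q)

/-- The Barnes-type multiple `q`-Euler polynomial
`E_{n,q}^{(r)}(x|w_1,…,w_r; a_1,…,a_r)
  = (2^r/(1-q)^n) Σ_{l=0}^n C(n,l)(-1)^l q^{lx} / ∏_{j=1}^r (1+q^{l w_j + a_j})`. -/
noncomputable def qEulerBarnes (n r : ℕ) (q x : ℝ) (w a : Fin r → ℝ) : ℝ :=
  (2 : ℝ) ^ r / (1 - q) ^ n *
    ∑ l ∈ range (n + 1),
      (n.choose l : ℝ) * (-1) ^ l * q ^ ((l : ℝ) * x) / ∏ j, (1 + q ^ ((l : ℝ) * w j + a j))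

theorem hasSum_prod_pow_of_abs_lt_one {r : ℕ} (b : Fin r → ℝ) (hb : ∀ j, |b j| < 1) :
    HasSum (fun m : Fin r → ℕ => ∏ j, b j ^ m j) (∏ j, (1 - b j)⁻¹) := by
  induction r with
  | zero => simp
  | succ r ih =>
    have hhead : HasSum (fun k : ℕ => b 0 ^ k) (1 - b 0)⁻¹ :=
      hasSum_geometric_of_abs_lt_one (hb 0)
    have htail := ih (fun j => b j.succ) fun j => hb j.succ
    have habs := Summable.mul_of_nonneg
      (summable_geometric_of_lt_one (abs_nonneg (b 0)) (hb 0))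
      (ih (fun j => |b j.succ|) fun j => by simpa using hb j.succ).summable
      (fun _ => by positivity) fun _ => by positivity
    have hprod := hhead.mul htail <| Summable.of_norm <| by
      simpa only [Real.norm_eq_abs, abs_mul, abs_prod, abs_pow] using habs
    rw [Fin.prod_univ_succ, ← (Fin.consEquiv fun _ => ℕ).hasSum_iff]
    simpa [Function.comp_def, Fin.consEquiv, Fin.prod_univ_succ] using hprod

theorem rpow_sum_mul_natCast {ι : Type*} (s : Finset ι) {q : ℝ} (hq : 0 < q) (c : ι → ℝ)
    (m : ι → ℕ) : q ^ (∑ i ∈ s, c i * m i) = ∏ i ∈ s, (q ^ c i) ^ m i := by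
  rw [Real.rpow_sum_of_pos hq]
  exact prod_congr rfl fun i _ => Real.rpow_mul_natCast hq.le _ _

theorem prod_neg_rpow_pow {ι : Type*} (s : Finset ι) {q : ℝ} (hq : 0 < q) (c : ι → ℝ)
    (m : ι → ℕ) :
    ∏ i ∈ s, (-q ^ c i) ^ m i = (-1) ^ (∑ i ∈ s, m i) * q ^ (∑ i ∈ s, c i * m i) := by
  rw [prod_congr rfl fun i _ => neg_pow (q ^ c i) (m i), prod_mul_distrib, prod_pow_eq_pow_sum,
    rpow_sum_mul_natCast s hq]

theorem summable_rpow_sum_mul_natCast {r : ℕ} {q : ℝ} (hq0 : 0 < q) (hq1 : q < 1)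
    {a : Fin r → ℝ} (ha : ∀ i, 0 < a i) :
    Summable fun m : Fin r → ℕ => q ^ (∑ i, a i * m i) := by
  simp_rw [rpow_sum_mul_natCast _ hq0]
  refine (hasSum_prod_pow_of_abs_lt_one _ fun i => ?_).summable
  rw [abs_of_pos (Real.rpow_pos_of_pos hq0 _)]
  exact Real.rpow_lt_one hq0.le hq1 (ha i)

theorem abs_qnum_le {q : ℝ} (hq0 : 0 < q) (hq1 : q < 1) {x y : ℝ} (hxy : x ≤ y) :
    |qnum q y| ≤ (1 + q ^ x) / (1 - q) := by
  have hpos : 0 < q ^ y := Real.rpow_pos_of_pos hq0 y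
  have hle : q ^ y ≤ q ^ x := Real.rpow_le_rpow_of_exponent_ge hq0 hq1.le hxy
  rw [qnum, abs_div, abs_of_pos (sub_pos.2 hq1)]
  gcongr
  exact abs_le.2 ⟨by linarith, by linarith⟩

theorem qnum_pow {q : ℝ} (hq : 0 < q) (y : ℝ) (n : ℕ) :
    qnum q y ^ n =
      ∑ l ∈ range (n + 1), (n.choose l : ℝ) * (-1) ^ l * q ^ ((l : ℝ) * y) / (1 - q) ^ n := by
  rw [qnum, div_pow, ← sum_div, sub_eq_neg_add, add_pow]
  refine congrArg (· / _) (sum_congr rfl fun l _ => ?_)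
  rw [mul_comm (l : ℝ), Real.rpow_mul_natCast hq.le, neg_pow]
  ring

theorem hasSum_qEulerBarnes {r : ℕ} (n : ℕ) {q : ℝ} (hq0 : 0 < q) (hq1 : q < 1) (x : ℝ)
    {w a : Fin r → ℝ} (hw : ∀ i, 0 ≤ w i) (ha : ∀ i, 0 < a i) :
    HasSum (fun m : Fin r → ℕ =>
        (-1) ^ (∑ i, m i) * q ^ (∑ i, a i * m i) * qnum q (x + ∑ i, w i * m i) ^ n)
      (qEulerBarnes n r q x w a / 2 ^ r) := by
  set c : ℕ → ℝ := fun l => n.choose l * (-1) ^ l * q ^ ((l : ℝ) * x) / (1 - q) ^ n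
  have hgeom (l : ℕ) : HasSum (fun m : Fin r → ℕ => ∏ j, (-q ^ ((l : ℝ) * w j + a j)) ^ m j)
      (∏ j, (1 + q ^ ((l : ℝ) * w j + a j))⁻¹) := by
    have := hasSum_prod_pow_of_abs_lt_one (fun j => -q ^ ((l : ℝ) * w j + a j)) fun j => by
      rw [abs_neg, abs_of_pos (Real.rpow_pos_of_pos hq0 _)]
      exact Real.rpow_lt_one hq0.le hq1 (by have := hw j; have := ha j; positivity)
    simpa only [sub_neg_eq_add] using this
  have hvalue : qEulerBarnes n r q x w a / 2 ^ r =
      ∑ l ∈ range (n + 1), c l * ∏ j, (1 + q ^ ((l : ℝ) * w j + a j))⁻¹ := by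
    unfold qEulerBarnes
    rw [div_eq_iff (by positivity), sum_mul, mul_sum]
    refine sum_congr rfl fun l _ => ?_
    rw [prod_inv_distrib, ← div_eq_mul_inv]
    simp only [c]
    field_simp
  rw [hvalue]
  refine (hasSum_sum fun l _ => (hgeom l).mul_left (c l)).congr_fun fun m => ?_
  rw [qnum_pow hq0, mul_sum]
  refine sum_congr rfl fun l _ => ?_
  have hrpow : q ^ (∑ i, a i * m i) * q ^ ((l : ℝ) * (x + ∑ i, w i * m i)) =
      q ^ ((l : ℝ) * x) * q ^ (∑ i, ((l : ℝ) * w i + a i) * m i) := by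
    rw [← Real.rpow_add hq0, ← Real.rpow_add hq0, mul_add]
    congr 1
    simp only [add_mul, sum_add_distrib, mul_sum, mul_assoc]
    ring
  rw [prod_neg_rpow_pow _ hq0]
  linear_combination (-1) ^ (∑ i, m i) * (n.choose l : ℝ) * (-1) ^ l / (1 - q) ^ n * hrpow

theorem summable_moment_egf_and_eq_tsum_mul_exp {β : Type*} {g y : β → ℂ} {M : ℝ}
    (hg : Summable fun m => ‖g m‖) (hy : ∀ m, ‖y m‖ ≤ M) (t : ℂ) :
    Summable (fun n : ℕ => ‖(∑' m, g m * y m ^ n) * t ^ n / n.factorial‖) ∧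
      Summable (fun m => ‖g m * Complex.exp (y m * t)‖) ∧
      ∑' n : ℕ, (∑' m, g m * y m ^ n) * t ^ n / n.factorial =
        ∑' m, g m * Complex.exp (y m * t) := by
  set F : ℕ × β → ℂ := fun p => g p.2 * y p.2 ^ p.1 * t ^ p.1 / p.1.factorial
  have hF_le (n : ℕ) (m : β) : ‖F (n, m)‖ ≤ (|M| * ‖t‖) ^ n / n.factorial * ‖g m‖ := by
    simp only [F, norm_div, norm_mul, norm_pow, Complex.norm_natCast, mul_pow]
    calc _ ≤ ‖g m‖ * |M| ^ n * ‖t‖ ^ n / n.factorial := by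
          gcongr
          exact (hy m).trans (le_abs_self M)
      _ = _ := by ring
  have hF : Summable F := by
    have := Summable.mul_of_nonneg (Real.summable_pow_div_factorial (|M| * ‖t‖)) hg
      (fun n => by positivity) fun m => norm_nonneg _
    exact Summable.of_norm_bounded this fun p => hF_le p.1 p.2
  have hrow (n : ℕ) : ∑' m, F (n, m) = (∑' m, g m * y m ^ n) * t ^ n / n.factorial := by
    simp only [F, mul_div_assoc, tsum_mul_right]
  have hcol (m : β) : ∑' n, F (n, m) = g m * Complex.exp (y m * t) := by
    simp only [F, Complex.exp_eq_exp_ℂ, NormedSpace.exp_eq_tsum_div, ← tsum_mul_left, mul_pow,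
      mul_assoc, mul_div_assoc]
  refine ⟨?_, ?_, ?_⟩
  · refine Summable.of_nonneg_of_le (fun n => norm_nonneg _) (fun n => ?_)
      ((Real.summable_pow_div_factorial (|M| * ‖t‖)).mul_right (∑' m, ‖g m‖))
    rw [← hrow]
    exact tsum_of_norm_bounded (hg.hasSum.mul_left _) (hF_le n)
  · refine Summable.of_nonneg_of_le (fun m => norm_nonneg _) (fun m => ?_)
      (hg.mul_right (Real.exp (M * ‖t‖)))
    rw [norm_mul]
    gcongr
    refine (Complex.norm_exp_le_exp_norm _).trans (Real.exp_le_exp.2 ?_)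
    rw [norm_mul]
    gcongr
    exact hy m
  · simp_rw [← hrow, ← hcol]
    exact (hF.tsum_comm (f := fun n m => F (n, m))).symm

theorem stmt_9_general (r : ℕ) (q : ℝ) (hq0 : 0 < q) (hq1 : q < 1) (x : ℝ)
    (w a : Fin r → ℝ) (hw : ∀ i, 0 < w i) (ha : ∀ i, 0 < a i) (t : ℂ) :
    Summable (fun n : ℕ => ‖((qEulerBarnes n r q x w a : ℝ) : ℂ) * t ^ n / (n.factorial : ℂ)‖) ∧
    Summable (fun m : Fin r → ℕ =>
      ‖(-1 : ℂ) ^ (∑ i, m i) * ((q ^ (∑ i, a i * m i) : ℝ) : ℂ) *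
        Complex.exp (((qnum q (x + ∑ i, w i * m i) : ℝ) : ℂ) * t)‖) ∧
    ∑' n : ℕ, ((qEulerBarnes n r q x w a : ℝ) : ℂ) * t ^ n / (n.factorial : ℂ) =
      (2 : ℂ) ^ r * ∑' m : Fin r → ℕ,
        (-1 : ℂ) ^ (∑ i, m i) * ((q ^ (∑ i, a i * m i) : ℝ) : ℂ) *
          Complex.exp (((qnum q (x + ∑ i, w i * m i) : ℝ) : ℂ) * t) := by
  set g : (Fin r → ℕ) → ℂ := fun m => (-1 : ℂ) ^ (∑ i, m i) * ((q ^ (∑ i, a i * m i) : ℝ) : ℂ)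
  set y : (Fin r → ℕ) → ℂ := fun m => ((qnum q (x + ∑ i, w i * m i) : ℝ) : ℂ)
  have hx_le (m : Fin r → ℕ) : x ≤ x + ∑ i, w i * m i :=
    le_add_of_nonneg_right (sum_nonneg fun i _ => by have := hw i; positivity)
  have hg : Summable fun m => ‖g m‖ := by
    simpa [g, abs_of_pos (Real.rpow_pos_of_pos hq0 _)] using
      summable_rpow_sum_mul_natCast hq0 hq1 ha
  have hy (m : Fin r → ℕ) : ‖y m‖ ≤ (1 + q ^ x) / (1 - q) := by
    simpa [y] using abs_qnum_le hq0 hq1 (hx_le m)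
  have hE (n : ℕ) : ((qEulerBarnes n r q x w a : ℝ) : ℂ) = 2 ^ r * ∑' m, g m * y m ^ n := by
    have := (hasSum_qEulerBarnes n hq0 hq1 x (fun i => (hw i).le) ha).tsum_eq
    rw [eq_div_iff (by positivity)] at this
    rw [← this]
    push_cast [Complex.ofReal_tsum]
    rw [mul_comm]
  obtain ⟨hsum_egf, hsum_exp, htsum⟩ := summable_moment_egf_and_eq_tsum_mul_exp hg hy t
  simp_rw [hE, mul_assoc (2 ^ r : ℂ), mul_div_assoc (2 ^ r : ℂ), tsum_mul_left, htsum]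
  exact ⟨by simpa only [norm_mul] using hsum_egf.mul_left ‖(2 : ℂ) ^ r‖, hsum_exp, rfl⟩

theorem stmt_9 (r : ℕ) (hr : 1 ≤ r) (q : ℝ) (hq0 : 0 < q) (hq1 : q < 1) (x : ℝ)
    (w a : Fin r → ℝ) (hw : ∀ i, 0 < w i) (ha : ∀ i, 0 < a i) (t : ℂ) :
    Summable (fun n : ℕ => ‖((qEulerBarnes n r q x w a : ℝ) : ℂ) * t ^ n / (n.factorial : ℂ)‖) ∧
    Summable (fun m : Fin r → ℕ =>
      ‖(-1 : ℂ) ^ (∑ i, m i) * ((q ^ (∑ i, a i * m i) : ℝ) : ℂ) *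
        Complex.exp (((qnum q (x + ∑ i, w i * m i) : ℝ) : ℂ) * t)‖) ∧
    ∑' n : ℕ, ((qEulerBarnes n r q x w a : ℝ) : ℂ) * t ^ n / (n.factorial : ℂ) =
      (2 : ℂ) ^ r * ∑' m : Fin r → ℕ,
        (-1 : ℂ) ^ (∑ i, m i) * ((q ^ (∑ i, a i * m i) : ℝ) : ℂ) *
          Complex.exp (((qnum q (x + ∑ i, w i * m i) : ℝ) : ℂ) * t) :=
  stmt_9_general r q hq0 hq1 x w a hw ha t
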